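/- arXiv:1103.3054 — 2 statements merged into one kernel-verified Lean document; each statement's English description precedes it below -/
import Mathlib

section
/- Lemma 2: For every 1≤t≤n and every σ∈𝒮^{t-1}, the conditional joint law of the induced Shannon strategies, output and current state given the past complete-state realization factorizes as P(T_t^a=t^a, T_t^b=t^b, Y_t=y, S_t=s | S_{[t-1]}=σ) = P_S(s)·P_{Y|S,T^a,T^b}(y|s,t^a,t^b)·π^σ_{T^a}(t^a)·π^σ_{T^b}(t^b), where π^σ_{T^a}(t^a) = Σ_{σ_a∈(𝒮^a)^{t-1}} P(S^a_{[t-1]}=σ_a | S_{[t-1]}=σ)·|{w_a∈𝒲_a : φ_t^a(w_a,σ_a)=t^a}|/|𝒲_a|, and π^σ_{T^b} is defined analogously. -/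
open scoped BigOperators
open Finset

noncomputable section

/-- Shannon entropy (base 2) of a pmf on a finite type (convention `0 * log 0 = 0`). -/
def ent {α : Type} [Fintype α] (p : α → ℝ) : ℝ :=
  -∑ x, p x * Real.logb 2 (p x)

/-- `p` is a probability mass function. -/
def isPMF {α : Type} [Fintype α] (p : α → ℝ) : Prop :=
  (∀ x, 0 ≤ p x) ∧ ∑ x, p x = 1

/-- Mutual information `I(A;B)` computed from a joint pmf on `α × β`. -/
def mutInfo {α β : Type} [Fintype α] [Fintype β] (p : α × β → ℝ) : ℝ :=
  ent (fun a => ∑ b, p (a, b)) + ent (fun b => ∑ a, p (a, b)) - ent p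

/-- Conditional mutual information `I(A;B|C)` computed from a joint pmf on `α × β × γ`. -/
def condMutInfo {α β γ : Type} [Fintype α] [Fintype β] [Fintype γ]
    (p : α × β × γ → ℝ) : ℝ :=
  ent (fun ac : α × γ => ∑ b, p (ac.1, b, ac.2))
    + ent (fun bc : β × γ => ∑ a, p (a, bc.1, bc.2))
    - ent p
    - ent (fun c : γ => ∑ a, ∑ b, p (a, b, c))

/-- A two-user memoryless finite-state MAC with i.i.d. state, noisy causal CSIT
(through the kernels `Qa`, `Qb`) and complete CSIR. -/
structure FSMAC (S Sa Sb Xa Xb Y : Type) [Fintype S] [Fintype Sa] [Fintype Sb]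
    [Fintype Xa] [Fintype Xb] [Fintype Y] : Type where
  PS : S → ℝ
  Qa : S → Sa → ℝ
  Qb : S → Sb → ℝ
  chan : Xa → Xb → S → Y → ℝ
  PS_pmf : isPMF PS
  Qa_pmf : ∀ s, isPMF (Qa s)
  Qb_pmf : ∀ s, isPMF (Qb s)
  chan_pmf : ∀ xa xb s, isPMF (chan xa xb s)

variable {S Sa Sb Xa Xb Y : Type} [Fintype S] [Fintype Sa] [Fintype Sb]
  [Fintype Xa] [Fintype Xb] [Fintype Y] [DecidableEq Sa] [DecidableEq Sb]

/-- `P_{Y|T^a,T^b,S}(y|t^a,t^b,s)`: channel kernel at the level of Shannon strategies. -/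
def stratKernel (M : FSMAC S Sa Sb Xa Xb Y) (ta : Sa → Xa) (tb : Sb → Xb)
    (s : S) (y : Y) : ℝ :=
  ∑ sa, ∑ sb, M.Qa s sa * M.Qb s sb * M.chan (ta sa) (tb sb) s y

/-- Joint single-letter law of `((T^a,T^b),Y,S)` induced by a memoryless stationary
team policy `(πa, πb)`. -/
def teamLaw (M : FSMAC S Sa Sb Xa Xb Y) (πa : (Sa → Xa) → ℝ) (πb : (Sb → Xb) → ℝ) :
    ((Sa → Xa) × (Sb → Xb)) × Y × S → ℝ :=
  fun x => M.PS x.2.2 * πa x.1.1 * πb x.1.2 * stratKernel M x.1.1 x.1.2 x.2.2 x.2.1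

/-- `I(T^a;Y|T^b,S)` under the team policy law. -/
def Ia (M : FSMAC S Sa Sb Xa Xb Y) (πa : (Sa → Xa) → ℝ) (πb : (Sb → Xb) → ℝ) : ℝ :=
  condMutInfo (fun x : (Sa → Xa) × Y × ((Sb → Xb) × S) =>
    teamLaw M πa πb ((x.1, x.2.2.1), x.2.1, x.2.2.2))

/-- `I(T^b;Y|T^a,S)` under the team policy law. -/
def Ib (M : FSMAC S Sa Sb Xa Xb Y) (πa : (Sa → Xa) → ℝ) (πb : (Sb → Xb) → ℝ) : ℝ :=
  condMutInfo (fun x : (Sb → Xb) × Y × ((Sa → Xa) × S) =>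
    teamLaw M πa πb ((x.2.2.1, x.1), x.2.1, x.2.2.2))

/-- `I(T^a,T^b;Y|S)` under the team policy law. -/
def Isum (M : FSMAC S Sa Sb Xa Xb Y) (πa : (Sa → Xa) → ℝ) (πb : (Sb → Xb) → ℝ) : ℝ :=
  condMutInfo (teamLaw M πa πb)

/-- The region `ℛ(π)` of a memoryless stationary team policy `π = (πa, πb)`. -/
def rateRegion (M : FSMAC S Sa Sb Xa Xb Y) (πa : (Sa → Xa) → ℝ)
    (πb : (Sb → Xb) → ℝ) : Set (ℝ × ℝ) :=
  {R : ℝ × ℝ | 0 ≤ R.1 ∧ 0 ≤ R.2 ∧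
    R.1 < Ia M πa πb ∧ R.2 < Ib M πa πb ∧ R.1 + R.2 < Isum M πa πb}

/-- A block code with causal encoders (encoder `a` sees `S^a_{[t]}`, encoder `b`
sees `S^b_{[t]}`) and a decoder with complete state information. -/
structure Code (M : FSMAC S Sa Sb Xa Xb Y) (n : ℕ) (Wa Wb : Type) : Type where
  encA : (t : Fin n) → (Fin (t.1 + 1) → Sa) → Wa → Xa
  encB : (t : Fin n) → (Fin (t.1 + 1) → Sb) → Wb → Xb
  dec : (Fin n → S) → (Fin n → Y) → Wa × Wb

/-- Joint pmf on messages, state sequences, noisy-observation sequences and outputs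
induced by a code (messages uniform and independent; memoryless channel and state). -/
def codeProb (M : FSMAC S Sa Sb Xa Xb Y) {n : ℕ} {Wa Wb : Type}
    [Fintype Wa] [Fintype Wb] (C : Code M n Wa Wb) (wa : Wa) (wb : Wb)
    (s : Fin n → S) (sa : Fin n → Sa) (sb : Fin n → Sb) (y : Fin n → Y) : ℝ :=
  (Fintype.card Wa : ℝ)⁻¹ * (Fintype.card Wb : ℝ)⁻¹ *
    ∏ t : Fin n,
      (M.PS (s t) * M.Qa (s t) (sa t) * M.Qb (s t) (sb t) *
        M.chan (C.encA t (fun i => sa (Fin.castLE t.isLt i)) wa)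
          (C.encB t (fun i => sb (Fin.castLE t.isLt i)) wb) (s t) (y t))

open Classical in
/-- Probability of an event under the code-induced joint law. -/
def codePr (M : FSMAC S Sa Sb Xa Xb Y) {n : ℕ} {Wa Wb : Type}
    [Fintype Wa] [Fintype Wb] (C : Code M n Wa Wb)
    (E : Wa → Wb → (Fin n → S) → (Fin n → Sa) → (Fin n → Sb) → (Fin n → Y) → Prop) : ℝ :=
  ∑ wa, ∑ wb, ∑ s, ∑ sa, ∑ sb, ∑ y,
    if E wa wb s sa sb y then codeProb M C wa wb s sa sb y else 0

/-- Average probability of error of a code. -/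
def errProb (M : FSMAC S Sa Sb Xa Xb Y) {n : ℕ} {Wa Wb : Type}
    [Fintype Wa] [Fintype Wb] (C : Code M n Wa Wb) : ℝ :=
  codePr M C (fun wa wb s _ _ y => C.dec s y ≠ (wa, wb))

/-- A rate pair is achievable if for every `ε > 0` and all large enough `n` there is a
code of blocklength `n` with rates at least `(Ra, Rb)` and error probability `≤ ε`. -/
def Achievable (M : FSMAC S Sa Sb Xa Xb Y) (Ra Rb : ℝ) : Prop :=
  0 ≤ Ra ∧ 0 ≤ Rb ∧
    ∀ ε : ℝ, 0 < ε → ∃ N : ℕ, ∀ n : ℕ, N ≤ n →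
      ∃ (Ma Mb : ℕ) (C : Code M n (Fin Ma) (Fin Mb)),
        Ra ≤ Real.logb 2 Ma / n ∧ Rb ≤ Real.logb 2 Mb / n ∧ errProb M C ≤ ε

/-- The capacity region `C_FS`: closure of the set of achievable rate pairs. -/
def capRegion (M : FSMAC S Sa Sb Xa Xb Y) : Set (ℝ × ℝ) :=
  closure {R : ℝ × ℝ | Achievable M R.1 R.2}

/-- `sup_{π_{T^a} ⊗ π_{T^b}} I(T^a,T^b;Y|S)`. -/
def sumRateSup (M : FSMAC S Sa Sb Xa Xb Y) : ℝ :=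
  sSup {x : ℝ | ∃ (πa : (Sa → Xa) → ℝ) (πb : (Sb → Xb) → ℝ),
    isPMF πa ∧ isPMF πb ∧ x = Isum M πa πb}

/-- Binary entropy function (base 2). -/
def binEnt (x : ℝ) : ℝ := -(x * Real.logb 2 x) - (1 - x) * Real.logb 2 (1 - x)

/-- The strict prefix `x_{[t-1]}` of a length-`n` sequence (entries before time `t`). -/
def prefixOf {α : Type} {n : ℕ} (x : Fin n → α) (t : Fin n) : Fin t.1 → α :=
  fun i => x (Fin.castLE t.isLt.le i)

/-- The Shannon strategy `T_t^a = φ_t^a(W_a, S^a_{[t-1]})` induced by encoder `a`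
at time `t`: the map `s^a ↦ φ_t^a((S^a_{[t-1]}, s^a), W_a)`. -/
def stratA {S Sa Sb Xa Xb Y : Type} [Fintype S] [Fintype Sa] [Fintype Sb]
    [Fintype Xa] [Fintype Xb] [Fintype Y] {M : FSMAC S Sa Sb Xa Xb Y} {n : ℕ}
    {Wa Wb : Type} (C : Code M n Wa Wb) (t : Fin n) (wa : Wa) (sa : Fin n → Sa) :
    Sa → Xa :=
  fun x => C.encA t (Fin.snoc (prefixOf sa t) x) wa

/-- The Shannon strategy `T_t^b = φ_t^b(W_b, S^b_{[t-1]})` induced by encoder `b`. -/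
def stratB {S Sa Sb Xa Xb Y : Type} [Fintype S] [Fintype Sa] [Fintype Sb]
    [Fintype Xa] [Fintype Xb] [Fintype Y] {M : FSMAC S Sa Sb Xa Xb Y} {n : ℕ}
    {Wa Wb : Type} (C : Code M n Wa Wb) (t : Fin n) (wb : Wb) (sb : Fin n → Sb) :
    Sb → Xb :=
  fun x => C.encB t (Fin.snoc (prefixOf sb t) x) wb

variable {S Sa Sb Xa Xb Y : Type} [Fintype S] [Fintype Sa] [Fintype Sb]
  [Fintype Xa] [Fintype Xb] [Fintype Y] [DecidableEq Sa] [DecidableEq Sb]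

/-- Conditional joint law of `(T_t^a, T_t^b, Y_t, S_t)` given `S_{[t-1]} = σ`,
under the code-induced law. -/
def condLaw (M : FSMAC S Sa Sb Xa Xb Y) {n : ℕ} {Wa Wb : Type}
    [Fintype Wa] [Fintype Wb] (C : Code M n Wa Wb) (t : Fin n) (σ : Fin t.1 → S) :
    ((Sa → Xa) × (Sb → Xb)) × Y × S → ℝ :=
  fun x =>
    codePr M C (fun wa wb s sa sb y =>
        prefixOf s t = σ ∧ stratA C t wa sa = x.1.1 ∧ stratB C t wb sb = x.1.2 ∧
          y t = x.2.1 ∧ s t = x.2.2) /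
      codePr M C (fun _ _ s _ _ _ => prefixOf s t = σ)

/-- The strategy `φ_t^a(w_a, σ_a) ∈ 𝒯^a` obtained from encoder `a` by fixing the
observation prefix to `σ_a` and the message to `w_a`. -/
def encStratA {M : FSMAC S Sa Sb Xa Xb Y} {n : ℕ} {Wa Wb : Type}
    (C : Code M n Wa Wb) (t : Fin n) (σa : Fin t.1 → Sa) (wa : Wa) : Sa → Xa :=
  fun x => C.encA t (Fin.snoc σa x) wa

/-- The strategy `φ_t^b(w_b, σ_b) ∈ 𝒯^b`. -/
def encStratB {M : FSMAC S Sa Sb Xa Xb Y} {n : ℕ} {Wa Wb : Type}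
    (C : Code M n Wa Wb) (t : Fin n) (σb : Fin t.1 → Sb) (wb : Wb) : Sb → Xb :=
  fun x => C.encB t (Fin.snoc σb x) wb

open Classical in
/-- `π^σ_{T^a}(t^a) = Σ_{σ_a} P(S^a_{[t-1]} = σ_a | S_{[t-1]} = σ) ·
|{w_a : φ_t^a(w_a,σ_a) = t^a}| / |𝒲_a|`. -/
def piA (M : FSMAC S Sa Sb Xa Xb Y) {n : ℕ} {Wa Wb : Type}
    [Fintype Wa] [Fintype Wb] (C : Code M n Wa Wb) (t : Fin n) (σ : Fin t.1 → S)
    (ta : Sa → Xa) : ℝ :=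
  ∑ σa : Fin t.1 → Sa,
    (codePr M C (fun _ _ s sa _ _ => prefixOf s t = σ ∧ prefixOf sa t = σa) /
        codePr M C (fun _ _ s _ _ _ => prefixOf s t = σ)) *
      ((Finset.univ.filter fun wa : Wa => encStratA C t σa wa = ta).card /
        (Fintype.card Wa : ℝ))

open Classical in
/-- `π^σ_{T^b}(t^b)`, defined analogously. -/
def piB (M : FSMAC S Sa Sb Xa Xb Y) {n : ℕ} {Wa Wb : Type}
    [Fintype Wa] [Fintype Wb] (C : Code M n Wa Wb) (t : Fin n) (σ : Fin t.1 → S)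
    (tb : Sb → Xb) : ℝ :=
  ∑ σb : Fin t.1 → Sb,
    (codePr M C (fun _ _ s _ sb _ => prefixOf s t = σ ∧ prefixOf sb t = σb) /
        codePr M C (fun _ _ s _ _ _ => prefixOf s t = σ)) *
      ((Finset.univ.filter fun wb : Wb => encStratB C t σb wb = tb).card /
        (Fintype.card Wb : ℝ))

/-- `η(ε) = (ε/(1-ε))·log₂|𝒴| + H_b(ε)/(1-ε)`. -/
def eta (Ycard : ℕ) (ε : ℝ) : ℝ :=
  ε / (1 - ε) * Real.logb 2 Ycard + binEnt ε / (1 - ε)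


open Classical in
def ind (c : Prop) : ℝ := if c then 1 else 0

lemma ind_true {c : Prop} (h : c) : ind c = 1 := by simp [ind, h]
lemma ind_false {c : Prop} (h : ¬c) : ind c = 0 := by simp [ind, h]
lemma ind_nonneg (c : Prop) : 0 ≤ ind c := by by_cases h : c <;> simp [ind, h]
lemma ite_eq_ind (c : Prop) [Decidable c] (x : ℝ) : (if c then x else 0) = ind c * x := by
  by_cases h : c <;> simp [ind, h]
lemma ind_and (p q : Prop) : ind (p ∧ q) = ind p * ind q := by
  by_cases hp : p <;> by_cases hq : q <;> simp [ind, hp, hq]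
lemma ind_mul_eq {c : Prop} {x y : ℝ} (h : c → x = y) : ind c * x = ind c * y := by
  by_cases hc : c
  · rw [h hc]
  · simp [ind_false hc]
lemma ind_true' : ind True = 1 := ind_true trivial
lemma sum_ind_eq {α : Type} [Fintype α] (a : α) (F : α → ℝ) :
    ∑ x, ind (x = a) * F x = F a := by
  classical
  simp [ind, ite_mul, Finset.sum_ite_eq']

lemma sum_pi_prod {α : Type} [Fintype α] {k : ℕ} (f : Fin k → α → ℝ) :
    ∑ g : Fin k → α, ∏ i, f i (g i) = ∏ i, ∑ a, f i a := by
  classical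
  rw [Finset.prod_univ_sum]
  rw [Fintype.piFinset_univ]

lemma sum_pi_one {α : Type} [Fintype α] {k : ℕ} (f : Fin k → α → ℝ)
    (h : ∀ i, ∑ a, f i a = 1) : ∑ g : Fin k → α, ∏ i, f i (g i) = 1 := by
  rw [sum_pi_prod]; simp [h]

lemma prod_extend {n m : ℕ} (hm : m ≤ n) (G : Fin m → ℝ) :
    (∏ j : Fin m, G j) = ∏ i : Fin n, if h : i.1 < m then G ⟨i.1, h⟩ else 1 := by
  have hL : (∏ j : Fin m, G j)
      = ∏ i ∈ Finset.range m, if h : i < m then G ⟨i, h⟩ else 1 := by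
    rw [← Fin.prod_univ_eq_prod_range]
    exact Finset.prod_congr rfl fun j _ => by simp [j.isLt]
  have hR : (∏ i : Fin n, if h : i.1 < m then G ⟨i.1, h⟩ else 1)
      = ∏ i ∈ Finset.range n, if h : i < m then G ⟨i, h⟩ else 1 :=
    Fin.prod_univ_eq_prod_range (fun i => if h : i < m then G ⟨i, h⟩ else 1) n
  rw [hL, hR]
  exact Finset.prod_subset (Finset.range_subset_range.2 hm)
    (fun x _ hx => dif_neg (by simpa using hx))

lemma sum_ind_one {β : Type*} [Fintype β] (b : β) : (∑ x : β, ind (b = x)) = 1 := by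
  rw [Finset.sum_eq_single b (fun x _ hx => ind_false (fun e => hx e.symm))
    (fun h => absurd (Finset.mem_univ b) h), ind_true rfl]

lemma keyM {α : Type} [Fintype α] {n : ℕ} (t : Fin n) (f : Fin n → α → ℝ)
    (h1 : ∀ i, t < i → ∑ a, f i a = 1) (p : Fin t.1 → α) (x : α) :
    (∑ g : Fin n → α,
        ind ((fun j => g (Fin.castLE t.isLt.le j)) = p) * ind (g t = x) * ∏ i, f i (g i))
      = (∏ j, f (Fin.castLE t.isLt.le j) (p j)) * f t x := by
  classical
  have step1 : ∀ g : Fin n → α,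
      ind ((fun j => g (Fin.castLE t.isLt.le j)) = p) * ind (g t = x) * ∏ i, f i (g i)
        = ∏ i, (if h : i.1 < t.1 then (if g i = p ⟨i.1, h⟩ then f i (g i) else 0)
            else if i = t then (if g i = x then f i (g i) else 0) else f i (g i)) := by
    intro g
    by_cases h1g : (fun j => g (Fin.castLE t.isLt.le j)) = p
    · by_cases h2g : g t = x
      · rw [ind_true h1g, ind_true h2g, one_mul, one_mul]
        refine Finset.prod_congr rfl fun i _ => ?_
        by_cases hi : i.1 < t.1
        · have hci : Fin.castLE t.isLt.le ⟨i.1, hi⟩ = i := by ext; rfl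
          have hpi : g i = p ⟨i.1, hi⟩ := by
            have h3 := congrFun h1g ⟨i.1, hi⟩
            rw [hci] at h3; exact h3
          rw [dif_pos hi, if_pos hpi]
        · rw [dif_neg hi]
          by_cases hit : i = t
          · rw [if_pos hit, if_pos (by rw [hit]; exact h2g)]
          · rw [if_neg hit]
      · rw [ind_false h2g]
        rw [mul_zero, zero_mul]
        symm
        refine Finset.prod_eq_zero (Finset.mem_univ t) ?_
        rw [dif_neg (lt_irrefl t.1), if_pos rfl, if_neg h2g]
    · rw [ind_false h1g, zero_mul, zero_mul]
      symm
      obtain ⟨j, hj⟩ := Function.ne_iff.mp h1g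
      refine Finset.prod_eq_zero (Finset.mem_univ (Fin.castLE t.isLt.le j)) ?_
      have hjlt : (Fin.castLE t.isLt.le j).1 < t.1 := j.isLt
      rw [dif_pos hjlt]
      have : (⟨(Fin.castLE t.isLt.le j).1, hjlt⟩ : Fin t.1) = j := by ext; rfl
      rw [this, if_neg hj]
  rw [Finset.sum_congr rfl fun g _ => step1 g]
  rw [sum_pi_prod (fun i a => if h : i.1 < t.1 then (if a = p ⟨i.1, h⟩ then f i a else 0)
            else if i = t then (if a = x then f i a else 0) else f i a)]
  have hval : ∀ i : Fin n,
      (∑ a, (if h : i.1 < t.1 then (if a = p ⟨i.1, h⟩ then f i a else 0)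
          else if i = t then (if a = x then f i a else 0) else f i a))
        = (if h : i.1 < t.1 then f i (p ⟨i.1, h⟩) else 1) * (if i = t then f t x else 1) := by
    intro i
    by_cases hi : i.1 < t.1
    · have hit : i ≠ t := by
        intro e; rw [e] at hi; exact absurd hi (lt_irrefl _)
      simp [hi, hit, Finset.sum_ite_eq']
    · by_cases hit : i = t
      · subst hit; simp [hi, Finset.sum_ite_eq']
      · have hlt : t < i := by
          rcases lt_or_ge t.1 i.1 with h | h
          · exact h
          · exact absurd (lt_of_le_of_ne h (by
              intro e; exact hit (Fin.ext e))) hi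
        simp [hi, hit, h1 i hlt]
  rw [Finset.prod_congr rfl fun i _ => hval i]
  rw [Finset.prod_mul_distrib]
  congr 1
  · rw [prod_extend (m := t.1) t.isLt.le (fun j => f (Fin.castLE t.isLt.le j) (p j))]
    refine Finset.prod_congr rfl fun i _ => ?_
    by_cases hi : i.1 < t.1
    · rw [dif_pos hi, dif_pos hi]
      have hci : Fin.castLE t.isLt.le ⟨i.1, hi⟩ = i := by ext; rfl
      rw [hci]
    · rw [dif_neg hi, dif_neg hi]
  · simp [Finset.prod_ite_eq' Finset.univ t (fun _ => f t x)]

lemma keyS {α : Type} [Fintype α] {n : ℕ} (t : Fin n) (f : Fin n → α → ℝ)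
    (h1 : ∀ i, i ≠ t → ∑ a, f i a = 1) (x : α) :
    ∑ g : Fin n → α, ind (g t = x) * ∏ i, f i (g i) = f t x := by
  classical
  have expand : ∀ g : Fin n → α, ind (g t = x) * ∏ i, f i (g i)
      = ∑ p : Fin t.1 → α,
          ind ((fun j => g (Fin.castLE t.isLt.le j)) = p) * ind (g t = x) * ∏ i, f i (g i) := by
    intro g
    rw [← Finset.sum_mul, ← Finset.sum_mul]
    rw [sum_ind_one, one_mul]
  rw [Finset.sum_congr rfl fun g _ => expand g, Finset.sum_comm]
  have h3 : ∀ p : Fin t.1 → α,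
      (∑ g : Fin n → α,
        ind ((fun j => g (Fin.castLE t.isLt.le j)) = p) * ind (g t = x) * ∏ i, f i (g i))
      = (∏ j, f (Fin.castLE t.isLt.le j) (p j)) * f t x :=
    fun p => keyM t f (fun i hi => h1 i (ne_of_gt hi)) p x
  rw [Finset.sum_congr rfl fun p _ => h3 p, ← Finset.sum_mul]
  have h4 : (∑ p : Fin t.1 → α, ∏ j, f (Fin.castLE t.isLt.le j) (p j)) = 1 := by
    refine sum_pi_one _ fun j => h1 _ ?_
    intro e
    have : (Fin.castLE t.isLt.le j).1 = t.1 := by rw [e]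
    exact absurd (this ▸ j.isLt) (lt_irrefl _)
  rw [h4, one_mul]

lemma sum_fiber_at {α : Type} [Fintype α] {n : ℕ} (t : Fin n) (F : (Fin n → α) → ℝ) :
    ∑ g : Fin n → α, F g = ∑ v : α, ∑ g : Fin n → α, ind (g t = v) * F g := by
  classical
  rw [Finset.sum_comm]
  refine Finset.sum_congr rfl fun g _ => ?_
  rw [← Finset.sum_mul, sum_ind_one, one_mul]

lemma sum_fiber_prefix {α : Type} [Fintype α] {n : ℕ} (t : Fin n) (F : (Fin n → α) → ℝ) :
    ∑ g : Fin n → α, F g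
      = ∑ p : Fin t.1 → α, ∑ g : Fin n → α,
          ind ((fun j => g (Fin.castLE t.isLt.le j)) = p) * F g := by
  classical
  rw [Finset.sum_comm]
  refine Finset.sum_congr rfl fun g _ => ?_
  rw [← Finset.sum_mul, sum_ind_one, one_mul]

lemma reorder5 {A B C D E : Type} [Fintype A] [Fintype B] [Fintype C] [Fintype D]
    [Fintype E] (G : A → B → C → D → E → ℝ) :
    (∑ c : C, ∑ d : D, ∑ a : A, ∑ b : B, ∑ e : E, G a b c d e)
      = ∑ a : A, ∑ c : C, ∑ e : E, ∑ b : B, ∑ d : D, G a b c d e := by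
  have h1 : (∑ c : C, ∑ d : D, ∑ a : A, ∑ b : B, ∑ e : E, G a b c d e)
      = ∑ z : C × D × A × B × E, G z.2.2.1 z.2.2.2.1 z.1 z.2.1 z.2.2.2.2 := by
    simp [Fintype.sum_prod_type]
  have h2 : (∑ a : A, ∑ c : C, ∑ e : E, ∑ b : B, ∑ d : D, G a b c d e)
      = ∑ z : A × C × E × B × D, G z.1 z.2.2.2.1 z.2.1 z.2.2.2.2 z.2.2.1 := by
    simp [Fintype.sum_prod_type]
  rw [h1, h2]
  exact Fintype.sum_equiv
    ⟨fun z => (z.2.2.1, z.1, z.2.2.2.2, z.2.2.2.1, z.2.1),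
     fun z => (z.2.1, z.2.2.2.2, z.1, z.2.2.2.1, z.2.2.1),
     fun z => rfl, fun z => rfl⟩ _ _ (fun z => rfl)


set_option linter.unusedSectionVars false

lemma take_eq_snoc {α : Type} {n : ℕ} (t : Fin n) (g : Fin n → α) :
    (fun i : Fin (t.1 + 1) => g (Fin.castLE t.isLt i)) = Fin.snoc (prefixOf g t) (g t) := by
  funext i
  refine Fin.lastCases ?_ ?_ i
  · have h : Fin.castLE t.isLt (Fin.last t.1) = t := by ext; rfl
    rw [h, Fin.snoc_last]
  · intro j
    rw [Fin.snoc_castSucc]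
    show g (Fin.castLE t.isLt j.castSucc) = prefixOf g t j
    have h2 : Fin.castLE t.isLt j.castSucc = Fin.castLE t.isLt.le j := by ext; simp
    show g (Fin.castLE t.isLt j.castSucc) = g (Fin.castLE t.isLt.le j)
    rw [h2]

lemma evalY (M : FSMAC S Sa Sb Xa Xb Y) {n : ℕ} (t : Fin n) (A : Fin n → Xa)
    (B : Fin n → Xb) (sv : Fin n → S) (Fy : Y → Prop) :
    (∑ y : Fin n → Y, ind (Fy (y t)) * ∏ i, M.chan (A i) (B i) (sv i) (y i))
      = ∑ v : Y, ind (Fy v) * M.chan (A t) (B t) (sv t) v := by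
  rw [sum_fiber_at t (fun y => ind (Fy (y t)) * ∏ i, M.chan (A i) (B i) (sv i) (y i))]
  refine Finset.sum_congr rfl fun v _ => ?_
  have h1 : ∀ y : Fin n → Y,
      ind (y t = v) * (ind (Fy (y t)) * ∏ i, M.chan (A i) (B i) (sv i) (y i))
        = ind (Fy v) * (ind (y t = v) * ∏ i, M.chan (A i) (B i) (sv i) (y i)) := by
    intro y
    by_cases h : y t = v
    · rw [h]; ring
    · rw [ind_false h]; ring
  rw [Finset.sum_congr rfl fun y _ => h1 y, ← Finset.mul_sum,
    keyS t (fun i a => M.chan (A i) (B i) (sv i) a)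
      (fun i _ => (M.chan_pmf (A i) (B i) (sv i)).2) v]

lemma sum_merge3 {A B C : Type} [Fintype A] [Fintype B] [Fintype C] {k : ℕ}
    (F : (Fin k → A) → (Fin k → B) → (Fin k → C) → ℝ) :
    (∑ a : Fin k → A, ∑ b : Fin k → B, ∑ c : Fin k → C, F a b c)
      = ∑ w : Fin k → A × B × C,
          F (fun i => (w i).1) (fun i => (w i).2.1) (fun i => (w i).2.2) := by
  have h1 : (∑ z : (Fin k → A) × (Fin k → B) × (Fin k → C), F z.1 z.2.1 z.2.2)
      = ∑ a : Fin k → A, ∑ b : Fin k → B, ∑ c : Fin k → C, F a b c := by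
    rw [Fintype.sum_prod_type]
    exact Finset.sum_congr rfl fun a _ => Fintype.sum_prod_type _
  rw [← h1]
  exact (Fintype.sum_equiv
    (show (Fin k → A × B × C) ≃ ((Fin k → A) × (Fin k → B) × (Fin k → C)) from
      ⟨fun w => (fun i => (w i).1, fun i => (w i).2.1, fun i => (w i).2.2),
       fun z => fun i => (z.1 i, z.2.1 i, z.2.2 i), fun w => rfl, fun z => rfl⟩)
    (fun w => F (fun i => (w i).1) (fun i => (w i).2.1) (fun i => (w i).2.2))
    (fun z => F z.1 z.2.1 z.2.2) (fun w => rfl)).symm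

lemma sum_unmerge3 {A B C : Type} [Fintype A] [Fintype B] [Fintype C] {k : ℕ}
    (H : (Fin k → A × B × C) → ℝ) :
    (∑ w : Fin k → A × B × C, H w)
      = ∑ a : Fin k → A, ∑ b : Fin k → B, ∑ c : Fin k → C,
          H (fun i => (a i, b i, c i)) := by
  rw [sum_merge3 (fun a b c => H (fun i => (a i, b i, c i)))]
  try exact Finset.sum_congr rfl fun w _ => rfl

open Classical in
lemma codePr_congr (M : FSMAC S Sa Sb Xa Xb Y) {n : ℕ} {Wa Wb : Type}
    [Fintype Wa] [Fintype Wb] (C : Code M n Wa Wb)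
    {E E' : Wa → Wb → (Fin n → S) → (Fin n → Sa) → (Fin n → Sb) → (Fin n → Y) → Prop}
    (h : ∀ wa wb s sa sb y, E wa wb s sa sb y ↔ E' wa wb s sa sb y) :
    codePr M C E = codePr M C E' := by
  simp only [codePr]
  refine Finset.sum_congr rfl fun wa _ => Finset.sum_congr rfl fun wb _ =>
    Finset.sum_congr rfl fun s _ => Finset.sum_congr rfl fun sa _ =>
    Finset.sum_congr rfl fun sb _ => Finset.sum_congr rfl fun y _ => ?_
  exact if_congr (h wa wb s sa sb y) rfl rfl

lemma codePr_emptyA (M : FSMAC S Sa Sb Xa Xb Y) {n : ℕ} {Wa Wb : Type}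
    [Fintype Wa] [Fintype Wb] (C : Code M n Wa Wb) (hWa : IsEmpty Wa)
    (E : Wa → Wb → (Fin n → S) → (Fin n → Sa) → (Fin n → Sb) → (Fin n → Y) → Prop) :
    codePr M C E = 0 := by
  simp [codePr, Finset.univ_eq_empty]

lemma codePr_emptyB (M : FSMAC S Sa Sb Xa Xb Y) {n : ℕ} {Wa Wb : Type}
    [Fintype Wa] [Fintype Wb] (C : Code M n Wa Wb) (hWb : IsEmpty Wb)
    (E : Wa → Wb → (Fin n → S) → (Fin n → Sa) → (Fin n → Sb) → (Fin n → Y) → Prop) :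
    codePr M C E = 0 := by
  simp [codePr, Finset.univ_eq_empty]

lemma mul_sum2 {W1 W2 : Type} [Fintype W1] [Fintype W2] (c : ℝ) (T : W1 → W2 → ℝ) :
    c * (∑ w1, ∑ w2, T w1 w2) = ∑ w1, ∑ w2, c * T w1 w2 := by
  rw [Finset.mul_sum]
  exact Finset.sum_congr rfl fun w1 _ => Finset.mul_sum _ _ _

open Classical in
lemma codePr_eval (M : FSMAC S Sa Sb Xa Xb Y) {n : ℕ} {Wa Wb : Type}
    [Fintype Wa] [Fintype Wb] (C : Code M n Wa Wb) (t : Fin n) (σ : Fin t.1 → S)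
    (Fa : Wa → (Fin t.1 → Sa) → Prop) (Fb : Wb → (Fin t.1 → Sb) → Prop)
    (Fy : Y → Prop) (Fs : S → Prop) :
    codePr M C (fun wa wb s sa sb y =>
        prefixOf s t = σ ∧ Fa wa (prefixOf sa t) ∧ Fb wb (prefixOf sb t) ∧
          Fy (y t) ∧ Fs (s t)) =
      (Fintype.card Wa : ℝ)⁻¹ * (Fintype.card Wb : ℝ)⁻¹ * (∏ j, M.PS (σ j)) *
        ∑ wa : Wa, ∑ wb : Wb, ∑ pa : Fin t.1 → Sa, ∑ pb : Fin t.1 → Sb,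
          ind (Fa wa pa) * ind (Fb wb pb) *
            ((∏ j, M.Qa (σ j) (pa j)) * (∏ j, M.Qb (σ j) (pb j))) *
            ∑ xs : S, ind (Fs xs) * M.PS xs *
              ∑ xa : Sa, M.Qa xs xa * ∑ xb : Sb, M.Qb xs xb *
                ∑ v : Y, ind (Fy v) *
                  M.chan (encStratA C t pa wa xa) (encStratB C t pb wb xb) xs v := by
  classical
  have hPS1 : (∑ a : S, M.PS a) = 1 := M.PS_pmf.2
  have hQa1 : ∀ a : S, (∑ b : Sa, M.Qa a b) = 1 := fun a => (M.Qa_pmf a).2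
  have hQb1 : ∀ a : S, (∑ c : Sb, M.Qb a c) = 1 := fun a => (M.Qb_pmf a).2
  have hf : ∀ i : Fin n, t < i →
      (∑ u : S × Sa × Sb, M.PS u.1 * M.Qa u.1 u.2.1 * M.Qb u.1 u.2.2) = 1 := by
    intro i _
    rw [Fintype.sum_prod_type]
    have h1 : ∀ a : S, (∑ u : Sa × Sb, M.PS a * M.Qa a u.1 * M.Qb a u.2) = M.PS a := by
      intro a
      rw [Fintype.sum_prod_type]
      simp only [← Finset.mul_sum, ← Finset.sum_mul, hQb1, hQa1, mul_one]
    rw [Finset.sum_congr rfl fun a _ => h1 a, hPS1]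
  simp only [codePr, codeProb]
  rw [mul_sum2 ((Fintype.card Wa : ℝ)⁻¹ * (Fintype.card Wb : ℝ)⁻¹ * ∏ j, M.PS (σ j))]
  refine Finset.sum_congr rfl fun wa _ => Finset.sum_congr rfl fun wb _ => ?_
  trans (∑ s : Fin n → S, ∑ sa : Fin n → Sa, ∑ sb : Fin n → Sb,
      ((ind (prefixOf s t = σ) * ind (Fa wa (prefixOf sa t)) * ind (Fb wb (prefixOf sb t)) *
          ind (Fs (s t)) *
          ((Fintype.card Wa : ℝ)⁻¹ * (Fintype.card Wb : ℝ)⁻¹ *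
            ∏ i, (M.PS (s i) * M.Qa (s i) (sa i) * M.Qb (s i) (sb i)))) *
        ∑ v : Y, ind (Fy v) *
          M.chan (C.encA t (fun j => sa (Fin.castLE t.isLt j)) wa)
            (C.encB t (fun j => sb (Fin.castLE t.isLt j)) wb) (s t) v))
  · refine Finset.sum_congr rfl fun s _ => Finset.sum_congr rfl fun sa _ =>
      Finset.sum_congr rfl fun sb _ => ?_
    trans (∑ y : Fin n → Y,
        ((ind (prefixOf s t = σ) * ind (Fa wa (prefixOf sa t)) * ind (Fb wb (prefixOf sb t)) *
            ind (Fs (s t)) *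
            ((Fintype.card Wa : ℝ)⁻¹ * (Fintype.card Wb : ℝ)⁻¹ *
              ∏ i, (M.PS (s i) * M.Qa (s i) (sa i) * M.Qb (s i) (sb i)))) *
          (ind (Fy (y t)) *
            ∏ i, M.chan (C.encA i (fun j => sa (Fin.castLE i.isLt j)) wa)
              (C.encB i (fun j => sb (Fin.castLE i.isLt j)) wb) (s i) (y i))))
    · refine Finset.sum_congr rfl fun y _ => ?_
      rw [ite_eq_ind]
      simp only [ind_and]
      rw [Finset.prod_mul_distrib]
      ring
    · rw [← Finset.mul_sum, evalY M t]
  trans (∑ P : Fin t.1 → S × Sa × Sb, ∑ X : S × Sa × Sb,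
      (ind ((fun j => (P j).1) = σ) * ind (Fa wa (fun j => (P j).2.1)) *
          ind (Fb wb (fun j => (P j).2.2)) * ind (Fs X.1) *
          ((Fintype.card Wa : ℝ)⁻¹ * (Fintype.card Wb : ℝ)⁻¹ *
            ∑ v : Y, ind (Fy v) *
              M.chan (encStratA C t (fun j => (P j).2.1) wa X.2.1)
                (encStratB C t (fun j => (P j).2.2) wb X.2.2) X.1 v)) *
        ((∏ j, (M.PS (P j).1 * M.Qa (P j).1 (P j).2.1 * M.Qb (P j).1 (P j).2.2)) *
          (M.PS X.1 * M.Qa X.1 X.2.1 * M.Qb X.1 X.2.2)))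
  · rw [sum_merge3 (fun s sa sb =>
        (ind (prefixOf s t = σ) * ind (Fa wa (prefixOf sa t)) * ind (Fb wb (prefixOf sb t)) *
            ind (Fs (s t)) *
            ((Fintype.card Wa : ℝ)⁻¹ * (Fintype.card Wb : ℝ)⁻¹ *
              ∏ i, (M.PS (s i) * M.Qa (s i) (sa i) * M.Qb (s i) (sb i)))) *
          ∑ v : Y, ind (Fy v) *
            M.chan (C.encA t (fun j => sa (Fin.castLE t.isLt j)) wa)
              (C.encB t (fun j => sb (Fin.castLE t.isLt j)) wb) (s t) v)]
    rw [sum_fiber_prefix t]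
    refine Finset.sum_congr rfl fun P _ => ?_
    rw [sum_fiber_at t]
    refine Finset.sum_congr rfl fun X _ => ?_
    trans (∑ w : Fin n → S × Sa × Sb,
        (ind ((fun j => (P j).1) = σ) * ind (Fa wa (fun j => (P j).2.1)) *
            ind (Fb wb (fun j => (P j).2.2)) * ind (Fs X.1) *
            ((Fintype.card Wa : ℝ)⁻¹ * (Fintype.card Wb : ℝ)⁻¹ *
              ∑ v : Y, ind (Fy v) *
                M.chan (encStratA C t (fun j => (P j).2.1) wa X.2.1)
                  (encStratB C t (fun j => (P j).2.2) wb X.2.2) X.1 v)) *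
          (ind ((fun j => w (Fin.castLE t.isLt.le j)) = P) * ind (w t = X) *
            ∏ i, ((fun (i : Fin n) (u : S × Sa × Sb) =>
              M.PS u.1 * M.Qa u.1 u.2.1 * M.Qb u.1 u.2.2) i (w i))))
    · refine Finset.sum_congr rfl fun w _ => ?_
      by_cases h1 : (fun j => w (Fin.castLE t.isLt.le j)) = P
      · by_cases h2 : w t = X
        · have hs1 : prefixOf (fun i => (w i).1) t = fun j => (P j).1 := by
            funext j
            show (w (Fin.castLE t.isLt.le j)).1 = (P j).1
            rw [show w (Fin.castLE t.isLt.le j) = P j from congrFun h1 j]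
          have hs2 : prefixOf (fun i => (w i).2.1) t = fun j => (P j).2.1 := by
            funext j
            show (w (Fin.castLE t.isLt.le j)).2.1 = (P j).2.1
            rw [show w (Fin.castLE t.isLt.le j) = P j from congrFun h1 j]
          have hs3 : prefixOf (fun i => (w i).2.2) t = fun j => (P j).2.2 := by
            funext j
            show (w (Fin.castLE t.isLt.le j)).2.2 = (P j).2.2
            rw [show w (Fin.castLE t.isLt.le j) = P j from congrFun h1 j]
          have hA : C.encA t (fun j => (w (Fin.castLE t.isLt j)).2.1) wa
              = encStratA C t (fun j => (P j).2.1) wa X.2.1 := by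
            have h0 := take_eq_snoc t (fun i => (w i).2.1)
            rw [hs2, h2] at h0
            rw [h0]
            rfl
          have hB : C.encB t (fun j => (w (Fin.castLE t.isLt j)).2.2) wb
              = encStratB C t (fun j => (P j).2.2) wb X.2.2 := by
            have h0 := take_eq_snoc t (fun i => (w i).2.2)
            rw [hs3, h2] at h0
            rw [h0]
            rfl
          simp only [hs1, hs2, hs3, h2, hA, hB]
          ring
        · simp [ind_false h2]
      · simp [ind_false h1]
    · rw [← Finset.mul_sum,
        keyM t (fun (i : Fin n) (u : S × Sa × Sb) =>
          M.PS u.1 * M.Qa u.1 u.2.1 * M.Qb u.1 u.2.2) hf P X]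
  · rw [sum_unmerge3]
    trans (∑ p1 : Fin t.1 → S, ∑ pa : Fin t.1 → Sa, ∑ pb : Fin t.1 → Sb,
        ∑ X : S × Sa × Sb,
        (ind (p1 = σ) * ind (Fa wa pa) * ind (Fb wb pb) * ind (Fs X.1) *
          ((Fintype.card Wa : ℝ)⁻¹ * (Fintype.card Wb : ℝ)⁻¹ *
            ∑ v : Y, ind (Fy v) *
              M.chan (encStratA C t pa wa X.2.1) (encStratB C t pb wb X.2.2) X.1 v)) *
        ((∏ j, (M.PS (p1 j) * M.Qa (p1 j) (pa j) * M.Qb (p1 j) (pb j))) *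
          (M.PS X.1 * M.Qa X.1 X.2.1 * M.Qb X.1 X.2.2)))
    · rfl
    · rw [Finset.sum_eq_single σ (fun p1 _ hne => Finset.sum_eq_zero fun pa _ =>
        Finset.sum_eq_zero fun pb _ => Finset.sum_eq_zero fun X _ => by
          simp [ind_false hne]) (fun h => absurd (Finset.mem_univ σ) h)]
      simp only [eq_self_iff_true, ind_true', one_mul]
      rw [mul_sum2]
      refine Finset.sum_congr rfl fun pa _ => Finset.sum_congr rfl fun pb _ => ?_
      trans (∑ xs : S, ∑ xa : Sa, ∑ xb : Sb,
          (ind (Fa wa pa) * ind (Fb wb pb) * ind (Fs xs) *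
            ((Fintype.card Wa : ℝ)⁻¹ * (Fintype.card Wb : ℝ)⁻¹ *
              ∑ v : Y, ind (Fy v) *
                M.chan (encStratA C t pa wa xa) (encStratB C t pb wb xb) xs v)) *
          ((∏ j, (M.PS (σ j) * M.Qa (σ j) (pa j) * M.Qb (σ j) (pb j))) *
            (M.PS xs * M.Qa xs xa * M.Qb xs xb)))
      · rw [Fintype.sum_prod_type]
        exact Finset.sum_congr rfl fun xs _ => Fintype.sum_prod_type _
      · simp only [Finset.mul_sum, Finset.sum_mul, Finset.prod_mul_distrib]
        refine Finset.sum_congr rfl fun xs _ => Finset.sum_congr rfl fun xa _ =>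
          Finset.sum_congr rfl fun xb _ => Finset.sum_congr rfl fun v _ => ?_
        ring

lemma denom_eval (M : FSMAC S Sa Sb Xa Xb Y) {n : ℕ} {Wa Wb : Type}
    [Fintype Wa] [Fintype Wb] [Nonempty Wa] [Nonempty Wb] (C : Code M n Wa Wb)
    (t : Fin n) (σ : Fin t.1 → S) :
    codePr M C (fun _ _ s _ _ _ => prefixOf s t = σ) = ∏ j, M.PS (σ j) := by
  classical
  have hPS1 : (∑ a : S, M.PS a) = 1 := M.PS_pmf.2
  have hQa1 : ∀ a : S, (∑ b : Sa, M.Qa a b) = 1 := fun a => (M.Qa_pmf a).2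
  have hQb1 : ∀ a : S, (∑ c : Sb, M.Qb a c) = 1 := fun a => (M.Qb_pmf a).2
  have hch : ∀ (a : Xa) (b : Xb) (s' : S), (∑ v : Y, M.chan a b s' v) = 1 :=
    fun a b s' => (M.chan_pmf a b s').2
  have hpa : (∑ pa : Fin t.1 → Sa, ∏ j, M.Qa (σ j) (pa j)) = 1 :=
    sum_pi_one _ (fun j => hQa1 (σ j))
  have hpb : (∑ pb : Fin t.1 → Sb, ∏ j, M.Qb (σ j) (pb j)) = 1 :=
    sum_pi_one _ (fun j => hQb1 (σ j))
  have ha : (Fintype.card Wa : ℝ) ≠ 0 := Nat.cast_ne_zero.2 Fintype.card_ne_zero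
  have hb : (Fintype.card Wb : ℝ) ≠ 0 := Nat.cast_ne_zero.2 Fintype.card_ne_zero
  rw [codePr_congr M C
    (E' := fun wa wb s sa sb y => prefixOf s t = σ ∧ True ∧ True ∧ True ∧ True)
    (fun wa wb s sa sb y => by simp)]
  rw [codePr_eval M C t σ (fun _ _ => True) (fun _ _ => True) (fun _ => True)
    (fun _ => True)]
  simp only [ind_true', one_mul, mul_one, hch, hQb1, hQa1, hPS1]
  simp only [← Finset.mul_sum, hpb, mul_one, hpa]
  simp only [Finset.sum_const, Finset.card_univ, nsmul_eq_mul, mul_one]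
  field_simp

lemma numA_eval (M : FSMAC S Sa Sb Xa Xb Y) {n : ℕ} {Wa Wb : Type}
    [Fintype Wa] [Fintype Wb] [Nonempty Wa] [Nonempty Wb] (C : Code M n Wa Wb)
    (t : Fin n) (σ : Fin t.1 → S) (σa : Fin t.1 → Sa) :
    codePr M C (fun _ _ s sa _ _ => prefixOf s t = σ ∧ prefixOf sa t = σa)
      = (∏ j, M.PS (σ j)) * ∏ j, M.Qa (σ j) (σa j) := by
  classical
  have hPS1 : (∑ a : S, M.PS a) = 1 := M.PS_pmf.2
  have hQa1 : ∀ a : S, (∑ b : Sa, M.Qa a b) = 1 := fun a => (M.Qa_pmf a).2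
  have hQb1 : ∀ a : S, (∑ c : Sb, M.Qb a c) = 1 := fun a => (M.Qb_pmf a).2
  have hch : ∀ (a : Xa) (b : Xb) (s' : S), (∑ v : Y, M.chan a b s' v) = 1 :=
    fun a b s' => (M.chan_pmf a b s').2
  have hpb : (∑ pb : Fin t.1 → Sb, ∏ j, M.Qb (σ j) (pb j)) = 1 :=
    sum_pi_one _ (fun j => hQb1 (σ j))
  have ha : (Fintype.card Wa : ℝ) ≠ 0 := Nat.cast_ne_zero.2 Fintype.card_ne_zero
  have hb : (Fintype.card Wb : ℝ) ≠ 0 := Nat.cast_ne_zero.2 Fintype.card_ne_zero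
  rw [codePr_congr M C
    (E' := fun wa wb s sa sb y =>
      prefixOf s t = σ ∧ prefixOf sa t = σa ∧ True ∧ True ∧ True)
    (fun wa wb s sa sb y => by simp)]
  rw [codePr_eval M C t σ (fun _ pa => pa = σa) (fun _ _ => True) (fun _ => True)
    (fun _ => True)]
  simp only [ind_true', one_mul, mul_one, hch, hQb1, hQa1, hPS1]
  simp only [← Finset.mul_sum, ← Finset.sum_mul, hpb, mul_one]
  simp only [sum_ind_eq σa (fun pa => ∏ j, M.Qa (σ j) (pa j))]
  simp only [Finset.sum_const, Finset.card_univ, nsmul_eq_mul, mul_one]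
  field_simp

lemma numB_eval (M : FSMAC S Sa Sb Xa Xb Y) {n : ℕ} {Wa Wb : Type}
    [Fintype Wa] [Fintype Wb] [Nonempty Wa] [Nonempty Wb] (C : Code M n Wa Wb)
    (t : Fin n) (σ : Fin t.1 → S) (σb : Fin t.1 → Sb) :
    codePr M C (fun _ _ s _ sb _ => prefixOf s t = σ ∧ prefixOf sb t = σb)
      = (∏ j, M.PS (σ j)) * ∏ j, M.Qb (σ j) (σb j) := by
  classical
  have hPS1 : (∑ a : S, M.PS a) = 1 := M.PS_pmf.2
  have hQa1 : ∀ a : S, (∑ b : Sa, M.Qa a b) = 1 := fun a => (M.Qa_pmf a).2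
  have hQb1 : ∀ a : S, (∑ c : Sb, M.Qb a c) = 1 := fun a => (M.Qb_pmf a).2
  have hch : ∀ (a : Xa) (b : Xb) (s' : S), (∑ v : Y, M.chan a b s' v) = 1 :=
    fun a b s' => (M.chan_pmf a b s').2
  have hpa : (∑ pa : Fin t.1 → Sa, ∏ j, M.Qa (σ j) (pa j)) = 1 :=
    sum_pi_one _ (fun j => hQa1 (σ j))
  have ha : (Fintype.card Wa : ℝ) ≠ 0 := Nat.cast_ne_zero.2 Fintype.card_ne_zero
  have hb : (Fintype.card Wb : ℝ) ≠ 0 := Nat.cast_ne_zero.2 Fintype.card_ne_zero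
  rw [codePr_congr M C
    (E' := fun wa wb s sa sb y =>
      prefixOf s t = σ ∧ True ∧ prefixOf sb t = σb ∧ True ∧ True)
    (fun wa wb s sa sb y => by simp)]
  rw [codePr_eval M C t σ (fun _ _ => True) (fun _ pb => pb = σb) (fun _ => True)
    (fun _ => True)]
  simp only [ind_true', one_mul, mul_one, hch, hQb1, hQa1, hPS1]
  simp only [sum_ind_eq]
  simp only [← Finset.mul_sum, ← Finset.sum_mul, mul_one, hpa, one_mul]
  simp only [Finset.sum_const, Finset.card_univ, nsmul_eq_mul, mul_one]
  field_simp

lemma reorder4 {A B C D : Type} [Fintype A] [Fintype B] [Fintype C] [Fintype D]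
    (G : A → B → C → D → ℝ) :
    (∑ a : A, ∑ b : B, ∑ c : C, ∑ d : D, G a b c d)
      = ∑ c : C, ∑ a : A, ∑ d : D, ∑ b : B, G a b c d := by
  have h1 : (∑ z : A × B × C × D, G z.1 z.2.1 z.2.2.1 z.2.2.2)
      = ∑ a : A, ∑ b : B, ∑ c : C, ∑ d : D, G a b c d := by
    rw [Fintype.sum_prod_type]
    refine Finset.sum_congr rfl fun a _ => ?_
    rw [Fintype.sum_prod_type]
    refine Finset.sum_congr rfl fun b _ => ?_
    exact Fintype.sum_prod_type _
  have h2 : (∑ z : C × A × D × B, G z.2.1 z.2.2.2 z.1 z.2.2.1)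
      = ∑ c : C, ∑ a : A, ∑ d : D, ∑ b : B, G a b c d := by
    rw [Fintype.sum_prod_type]
    refine Finset.sum_congr rfl fun c _ => ?_
    rw [Fintype.sum_prod_type]
    refine Finset.sum_congr rfl fun a _ => ?_
    exact Fintype.sum_prod_type _
  rw [← h1, ← h2]
  exact Fintype.sum_equiv
    (show (A × B × C × D) ≃ (C × A × D × B) from
      ⟨fun z => (z.2.2.1, z.1, z.2.2.2, z.2.1), fun z => (z.2.1, z.2.2.2, z.1, z.2.2.1),
       fun z => rfl, fun z => rfl⟩) _ _ (fun z => rfl)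

lemma quad_factor {W1 W2 A B : Type} [Fintype W1] [Fintype W2] [Fintype A] [Fintype B]
    (f : W1 → A → ℝ) (g : W2 → B → ℝ) (c : ℝ) :
    (∑ w1, ∑ w2, ∑ a, ∑ b, f w1 a * g w2 b * c)
      = (∑ a, ∑ w1, f w1 a) * ((∑ b, ∑ w2, g w2 b) * c) := by
  rw [reorder4 (fun w1 w2 a b => f w1 a * g w2 b * c)]
  rw [Finset.sum_mul]
  refine Finset.sum_congr rfl fun a _ => ?_
  rw [Finset.sum_mul]
  refine Finset.sum_congr rfl fun w1 _ => ?_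
  rw [Finset.sum_mul, Finset.mul_sum]
  refine Finset.sum_congr rfl fun b _ => ?_
  rw [Finset.sum_mul, Finset.mul_sum]
  refine Finset.sum_congr rfl fun w2 _ => ?_
  ring

open Classical in
lemma num_eval (M : FSMAC S Sa Sb Xa Xb Y) {n : ℕ} {Wa Wb : Type}
    [Fintype Wa] [Fintype Wb] [Nonempty Wa] [Nonempty Wb] (C : Code M n Wa Wb)
    (t : Fin n) (σ : Fin t.1 → S) (ta : Sa → Xa) (tb : Sb → Xb) (y₀ : Y) (s₀ : S) :
    codePr M C (fun wa wb s sa sb y =>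
        prefixOf s t = σ ∧ stratA C t wa sa = ta ∧ stratB C t wb sb = tb ∧
          y t = y₀ ∧ s t = s₀)
      = (∏ j, M.PS (σ j)) *
        ((M.PS s₀ * stratKernel M ta tb s₀ y₀) *
          ((∑ pa : Fin t.1 → Sa, (∏ j, M.Qa (σ j) (pa j)) *
              (((Finset.univ.filter fun wa : Wa => encStratA C t pa wa = ta).card : ℝ) /
                (Fintype.card Wa : ℝ))) *
           (∑ pb : Fin t.1 → Sb, (∏ j, M.Qb (σ j) (pb j)) *
              (((Finset.univ.filter fun wb : Wb => encStratB C t pb wb = tb).card : ℝ) /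
                (Fintype.card Wb : ℝ))))) := by
  classical
  have hSK : (∑ xa : Sa, M.Qa s₀ xa * ∑ xb : Sb, M.Qb s₀ xb *
      M.chan (ta xa) (tb xb) s₀ y₀) = stratKernel M ta tb s₀ y₀ := by
    simp only [stratKernel, Finset.mul_sum]
    exact Finset.sum_congr rfl fun xa _ => Finset.sum_congr rfl fun xb _ => by ring
  show codePr M C (fun wa wb s sa sb y =>
      prefixOf s t = σ ∧ encStratA C t (prefixOf sa t) wa = ta ∧
        encStratB C t (prefixOf sb t) wb = tb ∧ y t = y₀ ∧ s t = s₀) = _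
  rw [codePr_eval M C t σ (fun wa pa => encStratA C t pa wa = ta)
      (fun wb pb => encStratB C t pb wb = tb) (fun v => v = y₀) (fun xs => xs = s₀)]
  trans ((Fintype.card Wa : ℝ)⁻¹ * (Fintype.card Wb : ℝ)⁻¹ * (∏ j, M.PS (σ j)) *
      ∑ wa : Wa, ∑ wb : Wb, ∑ pa : Fin t.1 → Sa, ∑ pb : Fin t.1 → Sb,
        (ind (encStratA C t pa wa = ta) * ∏ j, M.Qa (σ j) (pa j)) *
          (ind (encStratB C t pb wb = tb) * ∏ j, M.Qb (σ j) (pb j)) *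
          (M.PS s₀ * stratKernel M ta tb s₀ y₀))
  · refine congrArg (fun z => (Fintype.card Wa : ℝ)⁻¹ * (Fintype.card Wb : ℝ)⁻¹ *
      (∏ j, M.PS (σ j)) * z) ?_
    refine Finset.sum_congr rfl fun wa _ => Finset.sum_congr rfl fun wb _ =>
      Finset.sum_congr rfl fun pa _ => Finset.sum_congr rfl fun pb _ => ?_
    by_cases hfa : encStratA C t pa wa = ta
    · by_cases hfb : encStratB C t pb wb = tb
      · simp only [hfa, hfb, mul_assoc]
        simp only [sum_ind_eq]
        rw [hSK]
        ring
      · simp [ind_false hfb]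
    · simp [ind_false hfa]
  · rw [quad_factor (fun wa pa => ind (encStratA C t pa wa = ta) * ∏ j, M.Qa (σ j) (pa j))
      (fun wb pb => ind (encStratB C t pb wb = tb) * ∏ j, M.Qb (σ j) (pb j))
      (M.PS s₀ * stratKernel M ta tb s₀ y₀)]
    have hcntA : ∀ pa : Fin t.1 → Sa,
        (∑ wa : Wa, ind (encStratA C t pa wa = ta) * ∏ j, M.Qa (σ j) (pa j))
          = (∏ j, M.Qa (σ j) (pa j)) *
            ((Finset.univ.filter fun wa : Wa => encStratA C t pa wa = ta).card : ℝ) := by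
      intro pa
      rw [← Finset.sum_mul, mul_comm]
      congr 1
      rw [show ((Finset.univ.filter fun wa : Wa => encStratA C t pa wa = ta).card : ℝ)
          = ∑ wa ∈ Finset.univ.filter (fun wa : Wa => encStratA C t pa wa = ta), (1:ℝ) by
        rw [Finset.sum_const, nsmul_eq_mul, mul_one]]
      rw [Finset.sum_filter]
      exact Finset.sum_congr rfl fun x _ => by
        by_cases h : encStratA C t pa x = ta <;> simp [ind, h]
    have hcntB : ∀ pb : Fin t.1 → Sb,
        (∑ wb : Wb, ind (encStratB C t pb wb = tb) * ∏ j, M.Qb (σ j) (pb j))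
          = (∏ j, M.Qb (σ j) (pb j)) *
            ((Finset.univ.filter fun wb : Wb => encStratB C t pb wb = tb).card : ℝ) := by
      intro pb
      rw [← Finset.sum_mul, mul_comm]
      congr 1
      rw [show ((Finset.univ.filter fun wb : Wb => encStratB C t pb wb = tb).card : ℝ)
          = ∑ wb ∈ Finset.univ.filter (fun wb : Wb => encStratB C t pb wb = tb), (1:ℝ) by
        rw [Finset.sum_const, nsmul_eq_mul, mul_one]]
      rw [Finset.sum_filter]
      exact Finset.sum_congr rfl fun x _ => by
        by_cases h : encStratB C t pb x = tb <;> simp [ind, h]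
    rw [Finset.sum_congr rfl fun pa _ => hcntA pa, Finset.sum_congr rfl fun pb _ => hcntB pb]
    simp only [div_eq_mul_inv, Finset.mul_sum, Finset.sum_mul]
    refine Finset.sum_congr rfl fun pa _ => Finset.sum_congr rfl fun pb _ => ?_
    ring


/-- **Lemma 2.** For every time `t` and every past complete-state realization
`σ ∈ 𝒮^{t-1}`, the conditional joint law of `(T_t^a, T_t^b, Y_t, S_t)` given
`S_{[t-1]} = σ` factorizes as
`P_S(s) · P_{Y|S,T^a,T^b}(y|s,t^a,t^b) · π^σ_{T^a}(t^a) · π^σ_{T^b}(t^b)`. -/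
theorem lemma2 {S Sa Sb Xa Xb Y : Type} [Fintype S] [Fintype Sa] [Fintype Sb]
    [Fintype Xa] [Fintype Xb] [Fintype Y] [DecidableEq Sa] [DecidableEq Sb]
    (M : FSMAC S Sa Sb Xa Xb Y) {n : ℕ} {Wa Wb : Type} [Fintype Wa] [Fintype Wb]
    (C : Code M n Wa Wb) (t : Fin n) (σ : Fin t.1 → S)
    (ta : Sa → Xa) (tb : Sb → Xb) (y : Y) (s : S) :
    condLaw M C t σ ((ta, tb), y, s) =
      M.PS s * stratKernel M ta tb s y * piA M C t σ ta * piB M C t σ tb := by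
  classical
  by_cases hWa : Nonempty Wa
  · by_cases hWb : Nonempty Wb
    · haveI := hWa
      haveI := hWb
      by_cases hσ : (∏ j, M.PS (σ j)) = 0
      · have hD : codePr M C (fun _ _ s _ _ _ => prefixOf s t = σ) = 0 := by
          rw [denom_eval M C t σ]
          exact hσ
        simp only [condLaw, piA, piB, hD, div_zero, zero_mul, mul_zero,
          Finset.sum_const_zero]
      · have hD := denom_eval M C t σ
        have hpiA : piA M C t σ ta
            = ∑ pa : Fin t.1 → Sa, (∏ j, M.Qa (σ j) (pa j)) *
              (((Finset.univ.filter fun wa : Wa => encStratA C t pa wa = ta).card : ℝ) /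
                (Fintype.card Wa : ℝ)) := by
          simp only [piA, hD]
          refine Finset.sum_congr rfl fun σa _ => ?_
          rw [numA_eval M C t σ σa, mul_div_cancel_left₀ _ hσ]
        have hpiB : piB M C t σ tb
            = ∑ pb : Fin t.1 → Sb, (∏ j, M.Qb (σ j) (pb j)) *
              (((Finset.univ.filter fun wb : Wb => encStratB C t pb wb = tb).card : ℝ) /
                (Fintype.card Wb : ℝ)) := by
          simp only [piB, hD]
          refine Finset.sum_congr rfl fun σb _ => ?_
          rw [numB_eval M C t σ σb, mul_div_cancel_left₀ _ hσ]
        rw [show condLaw M C t σ ((ta, tb), y, s) = codePr M C (fun wa wb s' sa sb y' =>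
            prefixOf s' t = σ ∧ stratA C t wa sa = ta ∧ stratB C t wb sb = tb ∧
              y' t = y ∧ s' t = s) / codePr M C (fun _ _ s' _ _ _ => prefixOf s' t = σ)
          from rfl]
        rw [num_eval M C t σ ta tb y s, hD, hpiA, hpiB, mul_div_cancel_left₀ _ hσ]
        ring
    · haveI hWb' : IsEmpty Wb := not_nonempty_iff.mp hWb
      have hzero : ∀ E, codePr M C E = 0 := codePr_emptyB M C hWb'
      simp only [condLaw, piA, piB, hzero, div_zero, zero_div, zero_mul, mul_zero,
        Finset.sum_const_zero]
  · haveI hWa' : IsEmpty Wa := not_nonempty_iff.mp hWa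
    have hzero : ∀ E, codePr M C E = 0 := codePr_emptyA M C hWa'
    simp only [condLaw, piA, piB, hzero, div_zero, zero_div, zero_mul, mul_zero,
      Finset.sum_const_zero]
end
end

section
/- Product form of strategies given past complete state: for any code on the memoryless FS-MAC with noisy CSIT, any time t and any σ∈𝒮^{t-1} with P(S_{[t-1]}=σ)>0, the conditional law factorizes as P(S_t=s, S_t^a=s^a, S_t^b=s^b, T_t^a=t^a, T_t^b=t^b | S_{[t-1]}=σ) = P_{S,S^a,S^b}(s,s^a,s^b)·π^σ_{T^a}(t^a)·π^σ_{T^b}(t^b); in particular, conditionally on S_{[t-1]}=σ, the pair of Shannon strategies (T_t^a, T_t^b) is independent of the current state triple (S_t,S_t^a,S_t^b), and T_t^a and T_t^b are conditionally independent of each other, with conditional marginals π^σ_{T^a} and π^σ_{T^b}. -/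
open scoped BigOperators
open Finset

noncomputable section

variable {S Sa Sb Xa Xb Y : Type} [Fintype S] [Fintype Sa] [Fintype Sb]
  [Fintype Xa] [Fintype Xb] [Fintype Y] [DecidableEq Sa] [DecidableEq Sb]

variable {S Sa Sb Xa Xb Y : Type} [Fintype S] [Fintype Sa] [Fintype Sb]
  [Fintype Xa] [Fintype Xb] [Fintype Y] [DecidableEq Sa] [DecidableEq Sb]

/-! Under the law induced by a code, the letters `(S_i, S^a_i, S^b_i)` are i.i.d. with law
`P_S · P_{S^a|S} · P_{S^b|S}` and independent of the messages, and the output sums out because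
the channel is a kernel. The event only involves the letters up to time `t`, so the later ones sum
out too. Fixing the past state to `σ` then leaves three independent factors: the current letter,
the pair `(W_a, S^a_{[t-1]})`, which determines `T_t^a`, and the pair `(W_b, S^b_{[t-1]})`, which
determines `T_t^b`; the last two decouple because the observation noises are conditionally
independent given the state. -/

theorem sum_comp_mul_prod_of_injective {ι κ α : Type*} [Fintype ι] [Fintype κ] [Fintype α]
    [DecidableEq ι] [DecidableEq κ] {f : κ → ι} (hf : Function.Injective f) (g : ι → α → ℝ)
    (hg : ∀ i, ∑ a, g i a = 1) (F : (κ → α) → ℝ) :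
    ∑ x : ι → α, F (x ∘ f) * ∏ i, g i (x i) = ∑ y : κ → α, F y * ∏ k, g (f k) (y k) := by
  let e : κ ⊕ ↥(Set.range f)ᶜ ≃ ι :=
    ((Equiv.ofInjective f hf).sumCongr (Equiv.refl _)).trans (Equiv.Set.sumCompl _)
  let E : (κ → α) × (↥(Set.range f)ᶜ → α) ≃ (ι → α) :=
    (Equiv.sumArrowEquivProdArrow _ _ α).symm.trans (e.arrowCongr (Equiv.refl α))
  have hE : ∀ y z i, E (y, z) (e i) = Sum.elim y z i := fun y z i => by
    simp [E, Equiv.arrowCongr, Equiv.sumArrowEquivProdArrow]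
  have he : ∀ k, e (.inl k) = f k := fun _ => rfl
  rw [← Fintype.sum_equiv E (fun p => F (E p ∘ f) * ∏ i, g i (E p i)) _ fun _ => rfl,
    Fintype.sum_prod_type]
  refine Fintype.sum_congr _ _ fun y => ?_
  have hprod : ∀ z, ∏ i, g i (E (y, z) i)
      = (∏ k, g (f k) (y k)) * ∏ r : ↥(Set.range f)ᶜ, g r (z r) := fun z => by
    simp only [← e.prod_comp, Fintype.prod_sum_type, hE, Sum.elim_inl, Sum.elim_inr, he]
    rfl
  have hcomp : ∀ z, E (y, z) ∘ f = y := fun z => funext fun k =>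
    (by simpa only [he, Sum.elim_inl] using hE y z (.inl k) : E (y, z) (f k) = y k)
  simp only [hprod, hcomp, ← mul_assoc, ← Finset.mul_sum, ← Fintype.prod_sum, hg,
    Finset.prod_const_one, mul_one]

theorem sum_prefixOf_mul_prod {α : Type} [Fintype α] {n : ℕ} (t : Fin n) (g : Fin n → α → ℝ)
    (hg : ∀ i, ∑ a, g i a = 1) (F : (Fin t.1 → α) → α → ℝ) :
    ∑ x : Fin n → α, F (prefixOf x t) (x t) * ∏ i, g i (x i)
      = ∑ p : Fin t.1 → α, ∑ a, F p a * (g t a * ∏ j, g (Fin.castLE t.isLt.le j) (p j)) := by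
  let f : Option (Fin t.1) → Fin n := fun o => o.elim t (Fin.castLE t.isLt.le)
  have hf : Function.Injective f := by
    rintro (_ | i) (_ | j) h <;> simp only [f, Option.elim, Fin.ext_iff, Fin.val_castLE] at h
    · rfl
    · exact absurd h.symm j.isLt.ne
    · exact absurd h i.isLt.ne
    · exact congrArg some (Fin.ext h)
  refine (sum_comp_mul_prod_of_injective hf g hg
    fun y => F (fun j => y (some j)) (y none)).trans ?_
  rw [← Fintype.sum_equiv Equiv.piOptionEquivProd.symm _ _ fun _ => rfl, Fintype.sum_prod_type,
    Finset.sum_comm]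
  simp [f, Fintype.prod_option, Equiv.piOptionEquivProd]

theorem sum_prod_kernel {S O : Type} [Fintype O] (Q : S → O → ℝ) (hQ : ∀ c, ∑ o, Q c o = 1)
    {m : ℕ} (σ : Fin m → S) : ∑ p : Fin m → O, ∏ j, Q (σ j) (p j) = 1 := by
  rw [← Fintype.prod_sum]
  simp [hQ]

theorem sum_kernel_prefixOf {S O : Type} [Fintype O] (Q : S → O → ℝ) (hQ : ∀ c, ∑ o, Q c o = 1)
    {n : ℕ} (t : Fin n) (s : Fin n → S) (Ec : O → Prop) (Ep : (Fin t.1 → O) → Prop)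
    [DecidablePred Ec] [DecidablePred Ep] :
    ∑ o : Fin n → O, (if Ec (o t) ∧ Ep (prefixOf o t) then ∏ i, Q (s i) (o i) else 0)
      = (∑ a, if Ec a then Q (s t) a else 0)
          * ∑ p, if Ep p then ∏ j, Q (prefixOf s t j) (p j) else 0 := by
  have h := sum_prefixOf_mul_prod t (fun i => Q (s i)) (fun i => hQ (s i))
    fun p a => if Ec a ∧ Ep p then 1 else 0
  simp only [boole_mul] at h
  rw [h, Finset.sum_mul_sum, Finset.sum_comm]
  simp only [ite_zero_mul_ite_zero]
  rfl

open Classical in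
theorem sum_state_prefixOf {S : Type} [Fintype S] (P : S → ℝ) (hP : ∑ c, P c = 1) {n : ℕ}
    (t : Fin n) (σ : Fin t.1 → S) (Es : S → Prop) (G : (Fin t.1 → S) → S → ℝ) :
    ∑ s : Fin n → S, (if prefixOf s t = σ ∧ Es (s t) then ∏ i, P (s i) else 0)
        * G (prefixOf s t) (s t)
      = (∏ j, P (σ j)) * ∑ c, if Es c then P c * G σ c else 0 := by
  have h := sum_prefixOf_mul_prod t (fun _ => P) (fun _ => hP)
    fun p c => (if p = σ ∧ Es c then 1 else 0) * G p c
  have hlhs : ∀ s : Fin n → S, (if prefixOf s t = σ ∧ Es (s t) then ∏ i, P (s i) else 0)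
      * G (prefixOf s t) (s t) = (if prefixOf s t = σ ∧ Es (s t) then 1 else 0)
        * G (prefixOf s t) (s t) * ∏ i, P (s i) := fun s => by split_ifs <;> ring
  rw [Fintype.sum_congr _ _ hlhs, h, Fintype.sum_eq_single σ fun p hp => by simp [hp],
    Finset.mul_sum]
  refine Finset.sum_congr rfl fun c _ => ?_
  by_cases hc : Es c <;> simp [hc]
  ring

theorem sum_mul_card_filter_div {W P : Type} [Fintype W] [Fintype P] (E : W → P → Prop)
    [∀ w p, Decidable (E w p)] (q : P → ℝ) :
    ∑ p, q p * ((univ.filter fun w => E w p).card / (Fintype.card W : ℝ))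
      = (Fintype.card W : ℝ)⁻¹ * ∑ w, ∑ p, if E w p then q p else 0 := by
  rw [Finset.sum_comm, Finset.mul_sum]
  refine Finset.sum_congr rfl fun p _ => ?_
  rw [Finset.natCast_card_filter, div_eq_inv_mul, mul_left_comm, Finset.mul_sum]
  simp only [mul_boole]

section

variable {S Sa Sb Xa Xb Y : Type} [Fintype S] [Fintype Sa] [Fintype Sb] [Fintype Xa] [Fintype Xb]
  [Fintype Y] {M : FSMAC S Sa Sb Xa Xb Y} {n : ℕ} {Wa Wb : Type} [Fintype Wa] [Fintype Wb]
  (C : Code M n Wa Wb)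

theorem sum_codeProb_output (wa : Wa) (wb : Wb) (s : Fin n → S) (sa : Fin n → Sa)
    (sb : Fin n → Sb) :
    ∑ y, codeProb M C wa wb s sa sb y
      = (Fintype.card Wa : ℝ)⁻¹ * (Fintype.card Wb : ℝ)⁻¹ *
          ∏ i, (M.PS (s i) * M.Qa (s i) (sa i) * M.Qb (s i) (sb i)) := by
  simp only [codeProb, Finset.prod_mul_distrib, ← Finset.mul_sum, ← Fintype.prod_sum,
    (M.chan_pmf _ _ _).2, Finset.prod_const_one, mul_one]

theorem codePr_eq_sum_states
    (E : Wa → Wb → (Fin n → S) → (Fin n → Sa) → (Fin n → Sb) → Prop)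
    [∀ wa wb s sa sb, Decidable (E wa wb s sa sb)] :
    codePr M C (fun wa wb s sa sb _ => E wa wb s sa sb)
      = (Fintype.card Wa : ℝ)⁻¹ * (Fintype.card Wb : ℝ)⁻¹ * ∑ wa, ∑ wb, ∑ s, ∑ sa, ∑ sb,
          if E wa wb s sa sb then ∏ i, (M.PS (s i) * M.Qa (s i) (sa i) * M.Qb (s i) (sb i))
          else 0 := by
  simp only [codePr, Finset.sum_ite_irrel, Finset.sum_const_zero, sum_codeProb_output,
    Finset.mul_sum, mul_ite, mul_zero]

theorem nonempty_of_codePr_pos {E} (h : 0 < codePr M C E) : Nonempty Wa ∧ Nonempty Wb := by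
  by_contra hne
  rw [not_and_or, not_nonempty_iff, not_nonempty_iff] at hne
  rcases hne with _ | _ <;> simp [codePr] at h

variable (t : Fin n) (σ : Fin t.1 → S)

open Classical in
theorem codePr_prefixOf_product (Es : S → Prop) (Eca : Sa → Prop) (Ecb : Sb → Prop)
    (Ea : Wa → (Fin t.1 → Sa) → Prop) (Eb : Wb → (Fin t.1 → Sb) → Prop)
    [∀ wa pa, Decidable (Ea wa pa)] [∀ wb pb, Decidable (Eb wb pb)] :
    codePr M C (fun wa wb s sa sb _ => prefixOf s t = σ ∧ Es (s t) ∧ Eca (sa t) ∧ Ecb (sb t) ∧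
        Ea wa (prefixOf sa t) ∧ Eb wb (prefixOf sb t))
      = (∏ j, M.PS (σ j))
        * (∑ c, if Es c then M.PS c * (∑ a, if Eca a then M.Qa c a else 0)
            * (∑ b, if Ecb b then M.Qb c b else 0) else 0)
        * (∑ pa, (∏ j, M.Qa (σ j) (pa j))
            * ((univ.filter fun wa => Ea wa pa).card / (Fintype.card Wa : ℝ)))
        * (∑ pb, (∏ j, M.Qb (σ j) (pb j))
            * ((univ.filter fun wb => Eb wb pb).card / (Fintype.card Wb : ℝ))) := by
  set Ka : S → ℝ := fun c => ∑ a, if Eca a then M.Qa c a else 0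
  set Kb : S → ℝ := fun c => ∑ b, if Ecb b then M.Qb c b else 0
  set La : Wa → (Fin t.1 → S) → ℝ := fun wa p =>
    ∑ pa, if Ea wa pa then ∏ j, M.Qa (p j) (pa j) else 0
  set Lb : Wb → (Fin t.1 → S) → ℝ := fun wb p =>
    ∑ pb, if Eb wb pb then ∏ j, M.Qb (p j) (pb j) else 0
  have hobs : ∀ wa wb (s : Fin n → S), ∑ sa, ∑ sb,
      (if prefixOf s t = σ ∧ Es (s t) ∧ Eca (sa t) ∧ Ecb (sb t) ∧ Ea wa (prefixOf sa t) ∧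
        Eb wb (prefixOf sb t) then ∏ i, (M.PS (s i) * M.Qa (s i) (sa i) * M.Qb (s i) (sb i))
        else 0)
      = (if prefixOf s t = σ ∧ Es (s t) then ∏ i, M.PS (s i) else 0)
          * ((Ka (s t) * La wa (prefixOf s t)) * (Kb (s t) * Lb wb (prefixOf s t))) := by
    intro wa wb s
    have hsplit : ∀ sa sb, (if prefixOf s t = σ ∧ Es (s t) ∧ Eca (sa t) ∧ Ecb (sb t) ∧
        Ea wa (prefixOf sa t) ∧ Eb wb (prefixOf sb t)
          then ∏ i, (M.PS (s i) * M.Qa (s i) (sa i) * M.Qb (s i) (sb i)) else 0)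
        = (if prefixOf s t = σ ∧ Es (s t) then ∏ i, M.PS (s i) else 0)
          * ((if Eca (sa t) ∧ Ea wa (prefixOf sa t) then ∏ i, M.Qa (s i) (sa i) else 0)
            * (if Ecb (sb t) ∧ Eb wb (prefixOf sb t) then ∏ i, M.Qb (s i) (sb i) else 0)) := by
      intro sa sb
      rw [ite_zero_mul_ite_zero, ite_zero_mul_ite_zero, Finset.prod_mul_distrib,
        Finset.prod_mul_distrib, mul_assoc]
      exact if_congr (by tauto) rfl rfl
    simp only [hsplit, ← Finset.mul_sum, ← Finset.sum_mul]
    rw [sum_kernel_prefixOf M.Qa (fun c => (M.Qa_pmf c).2) t s Eca (Ea wa),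
      sum_kernel_prefixOf M.Qb (fun c => (M.Qb_pmf c).2) t s Ecb (Eb wb)]
  have hstate : ∀ wa wb, ∑ s : Fin n → S,
      (if prefixOf s t = σ ∧ Es (s t) then ∏ i, M.PS (s i) else 0)
        * ((Ka (s t) * La wa (prefixOf s t)) * (Kb (s t) * Lb wb (prefixOf s t)))
      = (∏ j, M.PS (σ j))
          * ((∑ c, if Es c then M.PS c * Ka c * Kb c else 0) * La wa σ * Lb wb σ) := by
    intro wa wb
    rw [sum_state_prefixOf M.PS M.PS_pmf.2 t σ Es fun p c => Ka c * La wa p * (Kb c * Lb wb p),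
      Finset.sum_mul, Finset.sum_mul]
    congr 1
    refine Finset.sum_congr rfl fun c _ => ?_
    split_ifs <;> ring
  rw [codePr_eq_sum_states]
  simp only [hobs, hstate, sum_mul_card_filter_div, ← Finset.mul_sum, ← Finset.sum_mul]
  ring

open Classical in
theorem codePr_prefixOf_letter_strategies (s : S) (sA : Sa) (sB : Sb) (ta : Sa → Xa)
    (tb : Sb → Xb) :
    codePr M C (fun wa wb s' sa sb _ => prefixOf s' t = σ ∧ s' t = s ∧ sa t = sA ∧ sb t = sB ∧
        stratA C t wa sa = ta ∧ stratB C t wb sb = tb)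
      = (∏ j, M.PS (σ j)) * ((M.PS s * M.Qa s sA * M.Qb s sB)
        * (∑ pa, (∏ j, M.Qa (σ j) (pa j))
            * ((univ.filter fun wa => encStratA C t pa wa = ta).card / (Fintype.card Wa : ℝ)))
        * (∑ pb, (∏ j, M.Qb (σ j) (pb j))
            * ((univ.filter fun wb => encStratB C t pb wb = tb).card / (Fintype.card Wb : ℝ))))
      := by
  refine (codePr_prefixOf_product C t σ (· = s) (· = sA) (· = sB)
    (fun wa pa => encStratA C t pa wa = ta) (fun wb pb => encStratB C t pb wb = tb)).trans ?_
  simp only [Fintype.sum_ite_eq', mul_assoc]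

theorem codePr_prefixOf [Nonempty Wa] [Nonempty Wb] :
    codePr M C (fun _ _ s _ _ _ => prefixOf s t = σ) = ∏ j, M.PS (σ j) := by
  have h := codePr_prefixOf_product C t σ (fun _ => True) (fun _ => True) (fun _ => True)
    (fun _ _ => True) (fun _ _ => True)
  simp only [and_true] at h
  rw [h]
  simp [sum_prod_kernel, (M.Qa_pmf _).2, (M.Qb_pmf _).2, M.PS_pmf.2]

theorem codePr_prefixOf_obsA [Nonempty Wa] [Nonempty Wb] (σa : Fin t.1 → Sa) :
    codePr M C (fun _ _ s sa _ _ => prefixOf s t = σ ∧ prefixOf sa t = σa)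
      = (∏ j, M.PS (σ j)) * ∏ j, M.Qa (σ j) (σa j) := by
  classical
  have h := codePr_prefixOf_product C t σ (fun _ => True) (fun _ => True) (fun _ => True)
    (fun _ pa => pa = σa) (fun _ _ => True)
  simp only [true_and, and_true] at h
  rw [h]
  simp [sum_prod_kernel, (M.Qa_pmf _).2, (M.Qb_pmf _).2, M.PS_pmf.2,
    apply_ite Finset.card, ite_div]

theorem codePr_prefixOf_obsB [Nonempty Wa] [Nonempty Wb] (σb : Fin t.1 → Sb) :
    codePr M C (fun _ _ s _ sb _ => prefixOf s t = σ ∧ prefixOf sb t = σb)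
      = (∏ j, M.PS (σ j)) * ∏ j, M.Qb (σ j) (σb j) := by
  classical
  have h := codePr_prefixOf_product C t σ (fun _ => True) (fun _ => True) (fun _ => True)
    (fun _ _ => True) (fun _ pb => pb = σb)
  simp only [true_and] at h
  rw [h]
  simp [sum_prod_kernel, (M.Qa_pmf _).2, (M.Qb_pmf _).2, M.PS_pmf.2,
    apply_ite Finset.card, ite_div]

open Classical in
theorem piA_eq_sum (hσ : 0 < codePr M C (fun _ _ s _ _ _ => prefixOf s t = σ)) (ta : Sa → Xa) :
    piA M C t σ ta = ∑ σa, (∏ j, M.Qa (σ j) (σa j))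
      * ((univ.filter fun wa => encStratA C t σa wa = ta).card / (Fintype.card Wa : ℝ)) := by
  obtain ⟨_, _⟩ := nonempty_of_codePr_pos C hσ
  rw [codePr_prefixOf] at hσ
  simp only [piA, codePr_prefixOf_obsA, codePr_prefixOf, mul_div_cancel_left₀ _ hσ.ne']

open Classical in
theorem piB_eq_sum (hσ : 0 < codePr M C (fun _ _ s _ _ _ => prefixOf s t = σ)) (tb : Sb → Xb) :
    piB M C t σ tb = ∑ σb, (∏ j, M.Qb (σ j) (σb j))
      * ((univ.filter fun wb => encStratB C t σb wb = tb).card / (Fintype.card Wb : ℝ)) := by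
  obtain ⟨_, _⟩ := nonempty_of_codePr_pos C hσ
  rw [codePr_prefixOf] at hσ
  simp only [piB, codePr_prefixOf_obsB, codePr_prefixOf, mul_div_cancel_left₀ _ hσ.ne']

end

theorem strategies_product_form_general {S Sa Sb Xa Xb Y : Type} [Fintype S] [Fintype Sa]
    [Fintype Sb] [Fintype Xa] [Fintype Xb] [Fintype Y]
    (M : FSMAC S Sa Sb Xa Xb Y) {n : ℕ} {Wa Wb : Type} [Fintype Wa] [Fintype Wb]
    (C : Code M n Wa Wb) (t : Fin n) (σ : Fin t.1 → S)
    (hσ : 0 < codePr M C (fun _ _ s _ _ _ => prefixOf s t = σ))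
    (s : S) (sA : Sa) (sB : Sb) (ta : Sa → Xa) (tb : Sb → Xb) :
    codePr M C (fun wa' wb' s' sa' sb' _ =>
        prefixOf s' t = σ ∧ s' t = s ∧ sa' t = sA ∧ sb' t = sB ∧
          stratA C t wa' sa' = ta ∧ stratB C t wb' sb' = tb) /
      codePr M C (fun _ _ s' _ _ _ => prefixOf s' t = σ) =
      (M.PS s * M.Qa s sA * M.Qb s sB) * piA M C t σ ta * piB M C t σ tb := by
  obtain ⟨_, _⟩ := nonempty_of_codePr_pos C hσ
  have hP : (∏ j, M.PS (σ j)) ≠ 0 := (codePr_prefixOf C t σ ▸ hσ).ne'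
  rw [codePr_prefixOf_letter_strategies, codePr_prefixOf, mul_div_cancel_left₀ _ hP,
    piA_eq_sum C t σ hσ, piB_eq_sum C t σ hσ]

/-- Product form of the Shannon strategies given the past complete state: for any time
`t` and any `σ ∈ 𝒮^{t-1}` with `P(S_{[t-1]} = σ) > 0`,
`P(S_t = s, S_t^a = s^a, S_t^b = s^b, T_t^a = t^a, T_t^b = t^b | S_{[t-1]} = σ)
  = P_{S,S^a,S^b}(s,s^a,s^b) · π^σ_{T^a}(t^a) · π^σ_{T^b}(t^b)`;
in particular, given `S_{[t-1]} = σ`, the pair `(T_t^a, T_t^b)` is independent of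
`(S_t, S_t^a, S_t^b)` and `T_t^a, T_t^b` are conditionally independent with
conditional marginals `π^σ_{T^a}`, `π^σ_{T^b}`. -/
theorem strategies_product_form {S Sa Sb Xa Xb Y : Type} [Fintype S] [Fintype Sa]
    [Fintype Sb] [Fintype Xa] [Fintype Xb] [Fintype Y] [DecidableEq Sa] [DecidableEq Sb]
    (M : FSMAC S Sa Sb Xa Xb Y) {n : ℕ} {Wa Wb : Type} [Fintype Wa] [Fintype Wb]
    (C : Code M n Wa Wb) (t : Fin n) (σ : Fin t.1 → S)
    (hσ : 0 < codePr M C (fun _ _ s _ _ _ => prefixOf s t = σ))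
    (s : S) (sA : Sa) (sB : Sb) (ta : Sa → Xa) (tb : Sb → Xb) :
    codePr M C (fun wa' wb' s' sa' sb' _ =>
        prefixOf s' t = σ ∧ s' t = s ∧ sa' t = sA ∧ sb' t = sB ∧
          stratA C t wa' sa' = ta ∧ stratB C t wb' sb' = tb) /
      codePr M C (fun _ _ s' _ _ _ => prefixOf s' t = σ) =
      (M.PS s * M.Qa s sA * M.Qb s sB) * piA M C t σ ta * piB M C t σ tb :=
  strategies_product_form_general M C t σ hσ s sA sB ta tb
end
end
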